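/- The triviality of the monodromy of a framed cycle in general position does not depend on the choice of auxiliary line: if ℓ' and ℓ'' are two lines neither of which contains any intersection point of a pair of distinct edge lines of the framed cycle C(P,L) in general position, then M_{ℓ'}(ℓᵢ, C(P,L)) is trivial if and only if M_{ℓ''}(ℓᵢ, C(P,L)) is trivial. -/

import Mathlib

open scoped Classical

noncomputable section

abbrev V3 : Type := Fin 3 → ℝ
abbrev Form : Type := V3 → V3 → ℝ

/-- The covector dual to `p` (`dp`). -/
def dualE (p : V3) : V3 → ℝ := fun x => ∑ i, p i * x i

/-- The wedge product `dp ∧ dq`, as a bilinear form on ℝ³. -/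
def wedgeE (p q : V3) : Form :=
  fun x y => dualE p x * dualE q y - dualE p y * dualE q x

/-- The projective line through the points represented by `p` and `q`, as a subspace of ℝ³. -/
def projLine (p q : V3) : Submodule ℝ V3 := Submodule.span ℝ {p, q}

/-- `F` is a force whose line of force lies in the (2-dimensional) subspace `W`. -/
def AlongSub (F : Form) (W : Submodule ℝ V3) : Prop :=
  ∃ a b : V3, a ∈ W ∧ b ∈ W ∧ F = wedgeE a b

/-- A framed cycle in ℝP²: points `P i` together with lines `L i` through them. -/
structure FramedCycle (k : ℕ) where
  P : Fin k → V3
  L : Fin k → Submodule ℝ V3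
  hP : ∀ i, P i ≠ 0
  hL : ∀ i, Module.finrank ℝ (L i) = 2
  hPL : ∀ i, P i ∈ L i

/-- The line of the edge `pᵢ p_{i+1}` of a framed cycle. -/
def edgeLn {k : ℕ} [NeZero k] (C : FramedCycle k) (i : Fin k) : Submodule ℝ V3 :=
  projLine (C.P i) (C.P (i + 1))

/-- A framed cycle is in general position: the edge lines are genuine lines with exactly
`k(k−1)/2` distinct pairwise intersection points, and the framing line at `pᵢ` contains
neither `p_{i−1}` nor `p_{i+1}`. -/
def GenPos {k : ℕ} [NeZero k] (C : FramedCycle k) : Prop :=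
  (∀ i, Module.finrank ℝ (edgeLn C i) = 2) ∧
  (∀ i j, i ≠ j → edgeLn C i ≠ edgeLn C j) ∧
  (∀ i j i' j' : Fin k, i ≠ j → i' ≠ j' →
    ({i, j} : Finset (Fin k)) ≠ ({i', j'} : Finset (Fin k)) →
    edgeLn C i ⊓ edgeLn C j ≠ edgeLn C i' ⊓ edgeLn C j') ∧
  (∀ i, C.P (i - 1) ∉ C.L i ∧ C.P (i + 1) ∉ C.L i)

/-- A force-load on a framed cycle: `Fe i` is the stress `F_{i,i+1}` along the edge
`pᵢp_{i+1}` (with `F_{i+1,i} = −Fe i`), and `Ff i` is the framing force along `ℓᵢ`. -/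
structure CycleLoad (k : ℕ) where
  Fe : Fin k → Form
  Ff : Fin k → Form

/-- The force-load has its forces along the prescribed lines of the framed cycle. -/
def CycleLoad.Valid {k : ℕ} [NeZero k] (F : CycleLoad k) (C : FramedCycle k) : Prop :=
  (∀ i, AlongSub (F.Fe i) (edgeLn C i)) ∧ (∀ i, AlongSub (F.Ff i) (C.L i))

/-- The equilibrium condition `F_{i,i−1} + F_{i,i+1} + Fᵢ = 0` at the vertex `pᵢ`. -/
def EqAt {k : ℕ} [NeZero k] (F : CycleLoad k) (i : Fin k) : Prop :=
  -F.Fe (i - 1) + F.Fe i + F.Ff i = 0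

/-- The force-load is nonzero. -/
def CycleLoad.Nonzero {k : ℕ} (F : CycleLoad k) : Prop :=
  (∃ i, F.Fe i ≠ 0) ∨ (∃ i, F.Ff i ≠ 0)

/-- The shift operator `ξ_ℓ` with respect to the auxiliary line `ℓ`: the point `X` of a
framing line is sent to `m' ∩ ((e ∩ ℓ), X)`, where `e` is the edge line. -/
def shiftPt (e ℓ m' X : Submodule ℝ V3) : Submodule ℝ V3 := m' ⊓ ((e ⊓ ℓ) ⊔ X)

/-- Composition of `n` consecutive shift operators of the framed cycle `C`, starting at the
framing line `ℓᵢ`. -/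
def shiftChain {k : ℕ} [NeZero k] (C : FramedCycle k) (ℓ : Submodule ℝ V3) (i : Fin k) :
    ℕ → Submodule ℝ V3 → Submodule ℝ V3
  | 0, X => X
  | n + 1, X => shiftPt (edgeLn C (i + Fin.ofNat k n)) ℓ (C.L (i + Fin.ofNat k n + 1))
      (shiftChain C ℓ i n X)

/-- The monodromy operator `M_ℓ(ℓᵢ, C(P,L))` (the composition of the shifts around the whole
cycle) is trivial: it fixes every point of the line `ℓᵢ`. -/
def MonoTrivial {k : ℕ} [NeZero k] (C : FramedCycle k) (ℓ : Submodule ℝ V3) (i : Fin k) :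
    Prop :=
  ∀ X : Submodule ℝ V3, X ≤ C.L i → Module.finrank ℝ X = 1 → shiftChain C ℓ i k X = X


open Matrix Module Submodule

open Fin.NatCast

set_option linter.unusedSectionVars false

/-- kernel of dotting with n -/
def kerD (n : V3) : Submodule ℝ V3 where
  carrier := {x | n ⬝ᵥ x = 0}
  add_mem' := by intro a b ha hb; simp only [Set.mem_setOf_eq, dotProduct_add] at *; rw [ha, hb, add_zero]
  zero_mem' := by simp
  smul_mem' := by intro c x hx; simp only [Set.mem_setOf_eq, dotProduct_smul] at *; rw [hx, smul_zero]

lemma mem_kerD {n x : V3} : x ∈ kerD n ↔ n ⬝ᵥ x = 0 := Iff.rfl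

lemma I1 (a b c : V3) : a ⨯₃ (b ⨯₃ c) = (a ⬝ᵥ c) • b - (a ⬝ᵥ b) • c := by
  have : ∀ i : Fin 3, (a ⨯₃ (b ⨯₃ c)) i = ((a ⬝ᵥ c) • b - (a ⬝ᵥ b) • c) i := by
    intro i
    fin_cases i <;>
      simp [cross_apply, dotProduct, Fin.sum_univ_three] <;> ring
  exact funext this

lemma I2 (u v x : V3) : (u ⨯₃ v) ⨯₃ x = (x ⬝ᵥ u) • v - (x ⬝ᵥ v) • u := by
  have : ∀ i : Fin 3, ((u ⨯₃ v) ⨯₃ x) i = ((x ⬝ᵥ u) • v - (x ⬝ᵥ v) • u) i := by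
    intro i
    fin_cases i <;>
      simp [cross_apply, dotProduct, Fin.sum_univ_three] <;> ring
  exact funext this

/-- parallel from vanishing cross product -/
lemma cross_zero_imp {u v : V3} (h : u ⨯₃ v = 0) (hv : v ≠ 0) : ∃ c : ℝ, u = c • v := by
  have : ¬ LinearIndependent ℝ ![u, v] := by
    rw [← crossProduct_ne_zero_iff_linearIndependent]; simpa using h
  rw [linearIndependent_fin2] at this
  push_neg at this
  obtain ⟨c, hc⟩ := this (by simpa using hv)
  exact ⟨c, by simpa using hc.symm⟩

lemma mem_span_of_cross_zero {u v : V3} (h : u ⨯₃ v = 0) (hv : v ≠ 0) :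
    u ∈ Submodule.span ℝ {v} := by
  obtain ⟨c, rfl⟩ := cross_zero_imp h hv
  exact smul_mem _ _ (mem_span_singleton_self v)

/-- x orthogonal to a basis (det ≠ 0) is zero -/
lemma orth3 {u v w x : V3} (h : u ⬝ᵥ (v ⨯₃ w) ≠ 0)
    (hu : u ⬝ᵥ x = 0) (hv : v ⬝ᵥ x = 0) (hw : w ⬝ᵥ x = 0) : x = 0 := by
  have hvw : v ⨯₃ w ≠ 0 := by intro h0; rw [h0] at h; simp at h
  have hx : x ⨯₃ (v ⨯₃ w) = 0 := by
    rw [I1, dotProduct_comm x w, dotProduct_comm x v, hv, hw]; simp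
  by_contra hx0
  obtain ⟨c, rfl⟩ := cross_zero_imp hx hvw
  have : c * (u ⬝ᵥ (v ⨯₃ w)) = 0 := by
    have := hu
    rw [dotProduct_smul] at this
    simpa using this
  rcases mul_eq_zero.1 this with h1 | h1
  · exact hx0 (by rw [h1, zero_smul])
  · exact h h1

lemma finrank_V3 : Module.finrank ℝ V3 = 3 := by
  simp [Module.finrank_fin_fun]

/-- dotting with n as a linear map -/
def dotL (n : V3) : V3 →ₗ[ℝ] ℝ where
  toFun x := n ⬝ᵥ x
  map_add' a b := by simp [dotProduct_add]
  map_smul' c a := by simp [dotProduct_smul]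

lemma kerD_eq_ker (n : V3) : kerD n = LinearMap.ker (dotL n) := by
  ext x; rfl

/-- the kernel of dotting with a nonzero vector has rank 2 -/
lemma finrank_kerD {n : V3} (hn : n ≠ 0) : Module.finrank ℝ (kerD n) = 2 := by
  have hr : LinearMap.range (dotL n) = ⊤ := by
    rw [LinearMap.range_eq_top]
    intro c
    refine ⟨(c / (n ⬝ᵥ n)) • n, ?_⟩
    have hnn : n ⬝ᵥ n ≠ 0 := fun h => hn ((dotProduct_self_eq_zero).1 h)
    simp only [dotL, LinearMap.coe_mk, AddHom.coe_mk, dotProduct_smul, smul_eq_mul]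
    rw [div_mul_cancel₀ _ hnn]
  have := LinearMap.finrank_range_add_finrank_ker (dotL n)
  rw [hr, finrank_top, finrank_V3] at this
  have h1 : Module.finrank ℝ ℝ = 1 := Module.finrank_self ℝ
  rw [kerD_eq_ker]
  omega

/-- span of a pair with nonzero cross product equals the kernel plane of the cross product -/
lemma span_pair_eq_kerD {u v : V3} (h : u ⨯₃ v ≠ 0) :
    Submodule.span ℝ ({u, v} : Set V3) = kerD (u ⨯₃ v) := by
  apply Submodule.eq_of_le_of_finrank_le
  · rw [Submodule.span_le]
    rintro x (rfl | rfl)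
    · exact (mem_kerD).2 (by rw [dotProduct_comm]; exact dot_self_cross _ _)
    · exact (mem_kerD).2 (by rw [dotProduct_comm]; exact dot_cross_self _ _)
  · rw [finrank_kerD h]
    have hli : LinearIndependent ℝ ![u, v] := crossProduct_ne_zero_iff_linearIndependent.1 h
    have := finrank_span_eq_card hli
    rw [show Set.range ![u, v] = {u, v} by
      ext x; simp [Fin.exists_fin_two, or_comm]] at this
    simp only [this]
    simp

/-- intersection of two distinct planes -/
lemma kerD_inf_kerD {a b : V3} (h : a ⨯₃ b ≠ 0) :
    kerD a ⊓ kerD b = Submodule.span ℝ {a ⨯₃ b} := by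
  apply le_antisymm
  · intro x hx
    rw [Submodule.mem_inf] at hx
    obtain ⟨hx1, hx2⟩ := hx
    rw [mem_kerD] at hx1 hx2
    have hx : x ⨯₃ (a ⨯₃ b) = 0 := by
      rw [I1, dotProduct_comm x b, dotProduct_comm x a, hx1, hx2]; simp
    exact mem_span_of_cross_zero hx h
  · rw [Submodule.span_le, Set.singleton_subset_iff]
    exact ⟨(mem_kerD).2 (dot_self_cross _ _), (mem_kerD).2 (dot_cross_self _ _)⟩

/-- every rank 2 subspace is given by a normal vector -/
lemma exists_normal (W : Submodule ℝ V3) (h : Module.finrank ℝ W = 2) :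
    ∃ n : V3, n ≠ 0 ∧ W = kerD n := by
  have : FiniteDimensional ℝ W := FiniteDimensional.of_finrank_eq_succ h
  let b := Module.finBasisOfFinrankEq ℝ W h
  set u : V3 := (b 0 : V3) with hu
  set v : V3 := (b 1 : V3) with hv
  have hli : LinearIndependent ℝ (fun i : Fin 2 => ((b i : V3))) :=
    b.linearIndependent.map' W.subtype (Submodule.ker_subtype W)
  have hli2 : LinearIndependent ℝ ![u, v] := by
    convert hli using 1
    funext i
    fin_cases i <;> rfl
  have hc : u ⨯₃ v ≠ 0 := crossProduct_ne_zero_iff_linearIndependent.2 hli2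
  refine ⟨u ⨯₃ v, hc, ?_⟩
  rw [← span_pair_eq_kerD hc]
  have hW : W = Submodule.map W.subtype ⊤ := by
    rw [Submodule.map_top, Submodule.range_subtype]
  rw [hW, ← b.span_eq, Submodule.map_span]
  congr 1
  ext x
  simp only [Set.mem_image, Set.mem_range]
  constructor
  · rintro ⟨y, ⟨i, rfl⟩, rfl⟩
    fin_cases i
    · left; rfl
    · right; rfl
  · rintro (rfl | rfl)
    · exact ⟨b 0, ⟨0, rfl⟩, rfl⟩
    · exact ⟨b 1, ⟨1, rfl⟩, rfl⟩

lemma kerD_smul {c : ℝ} {n : V3} (hc : c ≠ 0) : kerD (c • n) = kerD n := by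
  ext x
  simp only [mem_kerD, smul_dotProduct, smul_eq_mul]
  exact ⟨fun h => by rcases mul_eq_zero.1 h with h | h; exact absurd h hc; exact h,
    fun h => by rw [h, mul_zero]⟩

lemma cross_ne_of_kerD_ne {a b : V3} (ha : a ≠ 0) (hb : b ≠ 0) (h : kerD a ≠ kerD b) :
    a ⨯₃ b ≠ 0 := by
  intro h0
  obtain ⟨c, rfl⟩ := cross_zero_imp h0 hb
  have hc : c ≠ 0 := by rintro rfl; exact ha (by simp)
  exact h (kerD_smul hc)

lemma span_singleton_smul {c : ℝ} (hc : c ≠ 0) (y : V3) :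
    Submodule.span ℝ {c • y} = Submodule.span ℝ {y} :=
  Submodule.span_singleton_smul_eq (IsUnit.mk0 c hc) y

/-- the transfer map of one shift step, on vectors -/
def Tmap (p q w m' : V3) (x : V3) : V3 :=
  (((p ⨯₃ q) ⨯₃ w) ⬝ᵥ m') • x - (x ⬝ᵥ m') • ((p ⨯₃ q) ⨯₃ w)

section Step

variable {p q w m m' : V3}
variable (hpq : p ⨯₃ q ≠ 0) (hmp : m ⬝ᵥ p = 0) (hmq : m ⬝ᵥ q ≠ 0)
  (hm'q : m' ⬝ᵥ q = 0) (hm'p : m' ⬝ᵥ p ≠ 0) (hwp : w ⬝ᵥ p ≠ 0) (hwq : w ⬝ᵥ q ≠ 0)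

lemma aux_a : (p ⨯₃ q) ⨯₃ w = (w ⬝ᵥ p) • q - (w ⬝ᵥ q) • p := I2 p q w

include hpq hwp in
lemma aux_a_ne : (p ⨯₃ q) ⨯₃ w ≠ 0 := by
  rw [aux_a]
  intro h0
  have h1 : (w ⬝ᵥ p) • q = (w ⬝ᵥ q) • p := sub_eq_zero.1 h0
  have h2 : (w ⬝ᵥ p) • (p ⨯₃ q) = 0 := by
    have := congrArg (fun y => p ⨯₃ y) h1
    simpa using this
  rcases smul_eq_zero.1 h2 with h | h
  · exact hwp h
  · exact hpq h

include hm'q in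
lemma aux_dot_a_m' : ((p ⨯₃ q) ⨯₃ w) ⬝ᵥ m' = -((w ⬝ᵥ q) * (m' ⬝ᵥ p)) := by
  rw [aux_a, sub_dotProduct, smul_dotProduct, smul_dotProduct, dotProduct_comm q m', hm'q,
    dotProduct_comm p m']
  simp only [smul_eq_mul]
  ring

include hmp in
lemma aux_dot_a_m : ((p ⨯₃ q) ⨯₃ w) ⬝ᵥ m = (w ⬝ᵥ p) * (m ⬝ᵥ q) := by
  rw [aux_a, sub_dotProduct, smul_dotProduct, smul_dotProduct, dotProduct_comm p m, hmp,
    dotProduct_comm q m]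
  simp only [smul_eq_mul]
  ring

include hm'q in
lemma S1 : Tmap p q w m' p = (-((m' ⬝ᵥ p) * (w ⬝ᵥ p))) • q := by
  rw [Tmap, aux_dot_a_m' hm'q, aux_a, dotProduct_comm p m']
  module

lemma Slin (c : ℝ) (x : V3) : Tmap p q w m' (c • x) = c • Tmap p q w m' x := by
  simp only [Tmap, smul_dotProduct, smul_eq_mul, smul_sub, smul_smul]
  module

lemma Sadd (x y : V3) : Tmap p q w m' (x + y) = Tmap p q w m' x + Tmap p q w m' y := by
  rw [Tmap, Tmap, Tmap, add_dotProduct, smul_add, add_smul]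
  abel

lemma Sm' (x : V3) : m' ⬝ᵥ Tmap p q w m' x = 0 := by
  rw [Tmap, dotProduct_sub, dotProduct_smul, dotProduct_smul, dotProduct_comm m' x,
    dotProduct_comm m' ((p ⨯₃ q) ⨯₃ w)]
  simp only [smul_eq_mul]
  ring

include hmp hm'q hm'p hwq in
lemma S2 : Tmap p q w m' (m ⨯₃ w) = ((m ⬝ᵥ q) * (w ⬝ᵥ p)) • (m' ⨯₃ w) := by
  set c : ℝ := (m ⬝ᵥ q) * (w ⬝ᵥ p) with hc
  set v : V3 := Tmap p q w m' (m ⨯₃ w) - c • (m' ⨯₃ w) with hv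
  have hdet : (p ⨯₃ q) ⬝ᵥ (m' ⨯₃ w) ≠ 0 := by
    rw [cross_dot_cross, dotProduct_comm p m', dotProduct_comm q w, dotProduct_comm q m', hm'q]
    simpa using mul_ne_zero hm'p hwq
  have h1 : m' ⬝ᵥ v = 0 := by
    rw [hv, dotProduct_sub, Sm', dotProduct_smul, dot_self_cross]
    simp
  have h2 : w ⬝ᵥ v = 0 := by
    have hwa : w ⬝ᵥ ((p ⨯₃ q) ⨯₃ w) = 0 := by
      rw [aux_a, dotProduct_sub, dotProduct_smul, dotProduct_smul]
      simp only [smul_eq_mul]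
      ring
    rw [hv, dotProduct_sub, dotProduct_smul]
    rw [Tmap, dotProduct_sub, dotProduct_smul, dotProduct_smul, dot_cross_self, hwa]
    simp
  have h3 : (p ⨯₃ q) ⬝ᵥ v = 0 := by
    have hna : (p ⨯₃ q) ⬝ᵥ ((p ⨯₃ q) ⨯₃ w) = 0 := dot_self_cross _ _
    have hnx : (p ⨯₃ q) ⬝ᵥ (m ⨯₃ w) = -((w ⬝ᵥ p) * (m ⬝ᵥ q)) := by
      rw [cross_dot_cross, dotProduct_comm p m, hmp, dotProduct_comm p w, dotProduct_comm q m]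
      ring
    have hdetval : (p ⨯₃ q) ⬝ᵥ (m' ⨯₃ w) = (m' ⬝ᵥ p) * (w ⬝ᵥ q) := by
      rw [cross_dot_cross, dotProduct_comm p m', dotProduct_comm q w, dotProduct_comm q m', hm'q]
      ring
    rw [hv, dotProduct_sub, dotProduct_smul]
    rw [Tmap, dotProduct_sub, dotProduct_smul, dotProduct_smul, hna, hnx,
      aux_dot_a_m' hm'q, hdetval, hc]
    simp only [smul_eq_mul]
    ring
  have hv0 : v = 0 := orth3 hdet h3 h1 h2
  rw [← sub_eq_zero, ← hv, hv0]

include hpq hmp hmq hm'q hm'p hwp hwq in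
lemma Sstep {x : V3} (hx : x ≠ 0) (hmx : m ⬝ᵥ x = 0) :
    shiftPt (kerD (p ⨯₃ q)) (kerD w) (kerD m') (Submodule.span ℝ {x})
      = Submodule.span ℝ {Tmap p q w m' x} ∧ Tmap p q w m' x ≠ 0 := by
  set a : V3 := (p ⨯₃ q) ⨯₃ w with ha
  have ha0 : a ≠ 0 := aux_a_ne hpq hwp
  have hma : m ⬝ᵥ a ≠ 0 := by
    rw [dotProduct_comm, aux_dot_a_m hmp]
    exact mul_ne_zero hwp hmq
  have hm'a : m' ⬝ᵥ a ≠ 0 := by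
    rw [dotProduct_comm, aux_dot_a_m' hm'q]
    simpa using mul_ne_zero hwq hm'p
  have hax : a ⨯₃ x ≠ 0 := by
    intro h0
    obtain ⟨c, hca⟩ := cross_zero_imp h0 hx
    rw [hca, dotProduct_smul] at hma
    rw [hmx] at hma
    simpa using hma
  set y : V3 := m' ⨯₃ (a ⨯₃ x) with hy
  have hyval : y = (m' ⬝ᵥ x) • a - (m' ⬝ᵥ a) • x := I1 m' a x
  have hy0 : y ≠ 0 := by
    intro h0
    rw [hyval] at h0
    have h1 : (m' ⬝ᵥ x) • a = (m' ⬝ᵥ a) • x := sub_eq_zero.1 h0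
    have h2 : (m' ⬝ᵥ x) * (m ⬝ᵥ a) = (m' ⬝ᵥ a) * (m ⬝ᵥ x) := by
      have := congrArg (fun z => m ⬝ᵥ z) h1
      simpa [dotProduct_smul, mul_comm] using this
    rw [hmx, mul_zero] at h2
    have hm'x : m' ⬝ᵥ x = 0 := by
      rcases mul_eq_zero.1 h2 with h | h
      · exact h
      · exact absurd h hma
    rw [hm'x, zero_smul, eq_comm, smul_eq_zero] at h1
    rcases h1 with h | h
    · exact hm'a h
    · exact hx h
  have hTy : Tmap p q w m' x = (-1 : ℝ) • y := by
    rw [Tmap, hyval, dotProduct_comm x m', dotProduct_comm a m', ← ha]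
    module
  constructor
  · have ha0' : (p ⨯₃ q) ⨯₃ w ≠ 0 := ha0
    have hy0' : m' ⨯₃ (a ⨯₃ x) ≠ 0 := hy0
    rw [shiftPt, kerD_inf_kerD ha0', ← Submodule.span_insert,
      span_pair_eq_kerD hax, kerD_inf_kerD hy0', hTy,
      span_singleton_smul (by norm_num : (-1 : ℝ) ≠ 0)]
  · rw [hTy]
    simpa using hy0

end Step

/-- a chosen normal vector of a plane -/
def normalOf (W : Submodule ℝ V3) : V3 :=
  if h : Module.finrank ℝ W = 2 then (exists_normal W h).choose else 0

lemma normalOf_spec {W : Submodule ℝ V3} (h : Module.finrank ℝ W = 2) :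
    normalOf W ≠ 0 ∧ W = kerD (normalOf W) := by
  rw [normalOf, dif_pos h]
  exact (exists_normal W h).choose_spec

section Cycle

open Finset

variable {k : ℕ} [NeZero k] (C : FramedCycle k) (hGP : GenPos C)

include hGP in
lemma genpos_k_ne_one : k ≠ 1 := by
  rintro rfl
  have h := hGP.1 0
  have h01 : (0 : Fin 1) + 1 = 0 := Subsingleton.elim _ _
  rw [edgeLn, h01, projLine, Set.pair_eq_singleton] at h
  rw [finrank_span_singleton (C.hP 0)] at h
  norm_num at h

include hGP in
lemma genpos_two_le : 2 ≤ k := by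
  have h0 := NeZero.ne k
  have h1 := genpos_k_ne_one C hGP
  omega

lemma fin_sub_one_ne (h2 : 2 ≤ k) (j : Fin k) : j - 1 ≠ j := by
  intro h
  have h1 : (1 : Fin k) = 0 := sub_eq_self.1 h
  have hv := congrArg Fin.val h1
  simp [Fin.val_one'] at hv
  omega

include hGP in
lemma edge_cross_ne (j : Fin k) : C.P j ⨯₃ C.P (j + 1) ≠ 0 := by
  intro h0
  obtain ⟨c, hc⟩ := cross_zero_imp h0 (C.hP (j + 1))
  have hle : edgeLn C j ≤ Submodule.span ℝ {C.P (j + 1)} := by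
    rw [edgeLn, projLine, Submodule.span_le]
    rintro x (rfl | rfl)
    · rw [hc]; exact Submodule.smul_mem _ _ (Submodule.mem_span_singleton_self _)
    · exact Submodule.mem_span_singleton_self _
  have := Submodule.finrank_mono hle
  rw [hGP.1 j, finrank_span_singleton (C.hP (j + 1))] at this
  omega

include hGP in
lemma edge_eq_kerD (j : Fin k) : edgeLn C j = kerD (C.P j ⨯₃ C.P (j + 1)) := by
  rw [edgeLn, projLine]
  exact span_pair_eq_kerD (edge_cross_ne C hGP j)

lemma L_eq_kerD (j : Fin k) : C.L j = kerD (normalOf (C.L j)) := (normalOf_spec (C.hL j)).2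

lemma normalOf_L_ne (j : Fin k) : normalOf (C.L j) ≠ 0 := (normalOf_spec (C.hL j)).1

lemma m_dot_self (j : Fin k) : normalOf (C.L j) ⬝ᵥ C.P j = 0 :=
  mem_kerD.1 (L_eq_kerD C j ▸ C.hPL j)

include hGP in
lemma m_dot_next (j : Fin k) : normalOf (C.L j) ⬝ᵥ C.P (j + 1) ≠ 0 := by
  intro h
  exact (hGP.2.2.2 j).2 ((L_eq_kerD C j).symm ▸ mem_kerD.2 h)

include hGP in
lemma m_dot_prev (j : Fin k) : normalOf (C.L (j + 1)) ⬝ᵥ C.P j ≠ 0 := by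
  intro h
  have := (hGP.2.2.2 (j + 1)).1
  rw [add_sub_cancel_right] at this
  exact this ((L_eq_kerD C (j + 1)).symm ▸ mem_kerD.2 h)

variable {ℓ : Submodule ℝ V3}

include hGP in
lemma w_dot_P (hℓ : Module.finrank ℝ ℓ = 2)
    (hint : ∀ i j : Fin k, i ≠ j → ¬(edgeLn C i ⊓ edgeLn C j ≤ ℓ)) (j : Fin k) :
    normalOf ℓ ⬝ᵥ C.P j ≠ 0 := by
  intro h
  have h2 : 2 ≤ k := genpos_two_le C hGP
  have hne : (j - 1 : Fin k) ≠ j := fin_sub_one_ne h2 j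
  have hP1 : C.P j ∈ edgeLn C (j - 1) := by
    rw [edgeLn, projLine, sub_add_cancel]
    exact Submodule.subset_span (by right; rfl)
  have hP2 : C.P j ∈ edgeLn C j :=
    Submodule.subset_span (by left; rfl)
  -- the intersection of the two edges is the span of P j
  set n1 : V3 := C.P (j - 1) ⨯₃ C.P (j - 1 + 1) with hn1
  set n2 : V3 := C.P j ⨯₃ C.P (j + 1) with hn2
  have hcross : n1 ⨯₃ n2 ≠ 0 := by
    apply cross_ne_of_kerD_ne (edge_cross_ne C hGP (j - 1)) (edge_cross_ne C hGP j)
    rw [← edge_eq_kerD C hGP, ← edge_eq_kerD C hGP]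
    exact hGP.2.1 _ _ hne
  have hmeet : edgeLn C (j - 1) ⊓ edgeLn C j = Submodule.span ℝ {n1 ⨯₃ n2} := by
    rw [edge_eq_kerD C hGP (j - 1), edge_eq_kerD C hGP j]
    exact kerD_inf_kerD hcross
  have hPmem : C.P j ∈ Submodule.span ℝ ({n1 ⨯₃ n2} : Set V3) := by
    rw [← hmeet]; exact ⟨hP1, hP2⟩
  obtain ⟨c, hc⟩ := Submodule.mem_span_singleton.1 hPmem
  have hc0 : c ≠ 0 := by rintro rfl; exact C.hP j (by rw [← hc, zero_smul])
  have hspan : Submodule.span ℝ ({n1 ⨯₃ n2} : Set V3) = Submodule.span ℝ {C.P j} := by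
    rw [← hc, span_singleton_smul hc0]
  apply hint (j - 1) j hne
  rw [hmeet, hspan, (normalOf_spec hℓ).2, Submodule.span_le, Set.singleton_subset_iff]
  exact mem_kerD.2 h

/-- the vector-level chain of shift maps -/
def chainV {k : ℕ} [NeZero k] (C : FramedCycle k) (w : V3) (i : Fin k) : ℕ → V3 → V3
  | 0, x => x
  | n + 1, x => Tmap (C.P (i + (n : Fin k))) (C.P (i + (n : Fin k) + 1)) w
      (normalOf (C.L (i + (n : Fin k) + 1))) (chainV C w i n x)

variable (hℓ : Module.finrank ℝ ℓ = 2)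
  (hint : ∀ i j : Fin k, i ≠ j → ¬(edgeLn C i ⊓ edgeLn C j ≤ ℓ)) (i : Fin k)

include hGP hℓ hint in
lemma chain_span :
    ∀ (n : ℕ) (x : V3), x ≠ 0 → normalOf (C.L i) ⬝ᵥ x = 0 →
    (shiftChain C ℓ i n (Submodule.span ℝ {x})
        = Submodule.span ℝ {chainV C (normalOf ℓ) i n x}
      ∧ chainV C (normalOf ℓ) i n x ≠ 0
      ∧ normalOf (C.L (i + (n : Fin k))) ⬝ᵥ chainV C (normalOf ℓ) i n x = 0) := by
  intro n
  induction n with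
  | zero =>
    intro x hx hmx
    refine ⟨rfl, hx, ?_⟩
    simpa [chainV] using hmx
  | succ n ih =>
    intro x hx hmx
    obtain ⟨h1, h2, h3⟩ := ih x hx hmx
    set j : Fin k := i + (n : Fin k) with hj
    have hcast : ((n + 1 : ℕ) : Fin k) = (n : Fin k) + 1 := by push_cast; ring
    have hidx : i + ((n + 1 : ℕ) : Fin k) = j + 1 := by rw [hcast, hj, add_assoc]
    have hstep := Sstep (edge_cross_ne C hGP j) (m_dot_self C j) (m_dot_next C hGP j)
      (m_dot_self C (j + 1)) (m_dot_prev C hGP j)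
      (w_dot_P C hGP hℓ hint j) (w_dot_P C hGP hℓ hint (j + 1)) h2 h3
    constructor
    · simp only [shiftChain, chainV, Fin.ofNat_eq_cast]
      rw [h1, ← hj]
      rw [← edge_eq_kerD C hGP j, ← (normalOf_spec hℓ).2, ← L_eq_kerD C (j + 1)] at hstep
      exact hstep.1
    · refine ⟨hstep.2, ?_⟩
      rw [hidx]
      simp only [chainV, ← hj]
      exact Sm' _

lemma chain_lin (w : V3) (n : ℕ) (c d : ℝ) (x y : V3) :
    chainV C w i n (c • x + d • y) = c • chainV C w i n x + d • chainV C w i n y := by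
  induction n with
  | zero => simp [chainV]
  | succ n ih =>
    simp only [chainV, ih, Sadd, Slin]

include hGP hℓ hint in
lemma chain_p (n : ℕ) :
    chainV C (normalOf ℓ) i n (C.P i)
      = (∏ t ∈ Finset.range n,
          (-((normalOf (C.L (i + (t : Fin k) + 1)) ⬝ᵥ C.P (i + (t : Fin k)))
            * (normalOf ℓ ⬝ᵥ C.P (i + (t : Fin k)))))) • C.P (i + (n : Fin k)) := by
  induction n with
  | zero => simp [chainV]
  | succ n ih =>
    set j : Fin k := i + (n : Fin k) with hj
    have hcast : ((n + 1 : ℕ) : Fin k) = (n : Fin k) + 1 := by push_cast; ring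
    have hidx : i + ((n + 1 : ℕ) : Fin k) = j + 1 := by rw [hcast, hj, add_assoc]
    rw [hidx]
    simp only [chainV, ← hj]
    rw [ih, Slin, S1 (m_dot_self C (j + 1)), Finset.prod_range_succ, smul_smul, ← hj]

include hGP hℓ hint in
lemma chain_q (n : ℕ) :
    chainV C (normalOf ℓ) i n (normalOf (C.L i) ⨯₃ normalOf ℓ)
      = (∏ t ∈ Finset.range n,
          ((normalOf (C.L (i + (t : Fin k))) ⬝ᵥ C.P (i + (t : Fin k) + 1))
            * (normalOf ℓ ⬝ᵥ C.P (i + (t : Fin k))))) • (normalOf (C.L (i + (n : Fin k))) ⨯₃ normalOf ℓ) := by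
  induction n with
  | zero => simp [chainV]
  | succ n ih =>
    set j : Fin k := i + (n : Fin k) with hj
    have hcast : ((n + 1 : ℕ) : Fin k) = (n : Fin k) + 1 := by push_cast; ring
    have hidx : i + ((n + 1 : ℕ) : Fin k) = j + 1 := by rw [hcast, hj, add_assoc]
    rw [hidx]
    simp only [chainV, ← hj]
    rw [ih, Slin, S2 (m_dot_self C j) (m_dot_self C (j + 1)) (m_dot_prev C hGP j)
      (w_dot_P C hGP hℓ hint (j + 1)), Finset.prod_range_succ, smul_smul, ← hj]

include hGP hℓ hint in
lemma mono_iff :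
    MonoTrivial C ℓ i ↔
      (∏ t ∈ Finset.range k, (-(normalOf (C.L (i + (t : Fin k) + 1)) ⬝ᵥ C.P (i + (t : Fin k)))))
        = ∏ t ∈ Finset.range k, (normalOf (C.L (i + (t : Fin k))) ⬝ᵥ C.P (i + (t : Fin k) + 1)) := by
  classical
  set w : V3 := normalOf ℓ with hwdef
  set m : V3 := normalOf (C.L i) with hmdef
  set p : V3 := C.P i with hpdef
  set q : V3 := m ⨯₃ w with hqdef
  have hw0 : w ≠ 0 := (normalOf_spec hℓ).1
  have hm0 : m ≠ 0 := normalOf_L_ne C i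
  have hwp : w ⬝ᵥ p ≠ 0 := w_dot_P C hGP hℓ hint i
  have hmp : m ⬝ᵥ p = 0 := m_dot_self C i
  have hwq : w ⬝ᵥ q = 0 := dot_cross_self m w
  have hmq : m ⬝ᵥ q = 0 := dot_self_cross m w
  have hq0 : q ≠ 0 := by
    intro h0
    obtain ⟨c, hc⟩ := cross_zero_imp h0 hw0
    have h1 : (c • w) ⬝ᵥ p = 0 := hc ▸ hmp
    rw [smul_dotProduct, smul_eq_mul] at h1
    rcases mul_eq_zero.1 h1 with h | h
    · exact hm0 (by rw [hc, h, zero_smul])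
    · exact hwp h
  have hpq : p ⨯₃ q ≠ 0 := by
    intro h0
    obtain ⟨c, hc⟩ := cross_zero_imp h0 hq0
    apply hwp
    rw [hc, dotProduct_smul, hwq, smul_zero]
  have hker : kerD m = Submodule.span ℝ {p, q} := by
    have hcm : m ⨯₃ (p ⨯₃ q) = 0 := by
      rw [I1, hmp, hmq]; simp
    obtain ⟨c, hc⟩ := cross_zero_imp hcm hpq
    have hc0 : c ≠ 0 := by rintro rfl; exact hm0 (by rw [hc, zero_smul])
    rw [span_pair_eq_kerD hpq, hc, kerD_smul hc0]
  -- the two multiplier products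
  set lam : ℕ → ℝ := fun t =>
    -((normalOf (C.L (i + (t : Fin k) + 1)) ⬝ᵥ C.P (i + (t : Fin k))) * (w ⬝ᵥ C.P (i + (t : Fin k)))) with hlam
  set mu : ℕ → ℝ := fun t =>
    (normalOf (C.L (i + (t : Fin k))) ⬝ᵥ C.P (i + (t : Fin k) + 1)) * (w ⬝ᵥ C.P (i + (t : Fin k))) with hmu
  set Lam : ℝ := ∏ t ∈ Finset.range k, lam t with hLam
  set Mu : ℝ := ∏ t ∈ Finset.range k, mu t with hMu
  have hlam0 : ∀ t, lam t ≠ 0 := fun t => by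
    simp only [hlam, neg_ne_zero]
    exact mul_ne_zero (m_dot_prev C hGP _) (w_dot_P C hGP hℓ hint _)
  have hmu0 : ∀ t, mu t ≠ 0 := fun t =>
    mul_ne_zero (m_dot_next C hGP _) (w_dot_P C hGP hℓ hint _)
  have hLam0 : Lam ≠ 0 := Finset.prod_ne_zero_iff.2 fun t _ => hlam0 t
  have hMu0 : Mu ≠ 0 := Finset.prod_ne_zero_iff.2 fun t _ => hmu0 t
  have hik : i + ((k : ℕ) : Fin k) = i := by rw [Fin.natCast_self, add_zero]
  have hcp : chainV C w i k p = Lam • p := by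
    have := chain_p C hGP hℓ hint i k
    rwa [hik] at this
  have hcq : chainV C w i k q = Mu • q := by
    have := chain_q C hGP hℓ hint i k
    rwa [hik] at this
  -- reduce the target products
  have hsplit : (Lam = Mu) ↔
      ((∏ t ∈ Finset.range k, (-(normalOf (C.L (i + (t : Fin k) + 1)) ⬝ᵥ C.P (i + (t : Fin k)))))
        = ∏ t ∈ Finset.range k, (normalOf (C.L (i + (t : Fin k))) ⬝ᵥ C.P (i + (t : Fin k) + 1))) := by
    have hA : (∏ t ∈ Finset.range k, (w ⬝ᵥ C.P (i + (t : Fin k)))) ≠ 0 :=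
      Finset.prod_ne_zero_iff.2 fun t _ => w_dot_P C hGP hℓ hint _
    have e1 : Lam = (∏ t ∈ Finset.range k, (-(normalOf (C.L (i + (t : Fin k) + 1)) ⬝ᵥ C.P (i + (t : Fin k)))))
        * ∏ t ∈ Finset.range k, (w ⬝ᵥ C.P (i + (t : Fin k))) := by
      rw [hLam, ← Finset.prod_mul_distrib]
      exact Finset.prod_congr rfl fun t _ => by rw [hlam]; ring
    have e2 : Mu = (∏ t ∈ Finset.range k, (normalOf (C.L (i + (t : Fin k))) ⬝ᵥ C.P (i + (t : Fin k) + 1)))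
        * ∏ t ∈ Finset.range k, (w ⬝ᵥ C.P (i + (t : Fin k))) := by
      rw [hMu, ← Finset.prod_mul_distrib]
    rw [e1, e2]
    exact ⟨fun h => mul_right_cancel₀ hA h, fun h => by rw [h]⟩
  rw [← hsplit]
  constructor
  · -- monodromy trivial implies Lam = Mu
    intro hMT
    have hx0 : p + q ≠ 0 := by
      intro h0
      apply hwp
      have := congrArg (fun z => w ⬝ᵥ z) h0
      simpa [dotProduct_add, hwq] using this
    have hle : Submodule.span ℝ {p + q} ≤ C.L i := by
      rw [Submodule.span_singleton_le_iff_mem, L_eq_kerD C i, ← hmdef]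
      exact mem_kerD.2 (by rw [dotProduct_add, hmp, hmq, add_zero])
    have hmpq : m ⬝ᵥ (p + q) = 0 := by rw [dotProduct_add, hmp, hmq, add_zero]
    have hMTX := hMT _ hle (finrank_span_singleton hx0)
    have hchain := (chain_span C hGP hℓ hint i k (p + q) hx0 hmpq).1
    have hlin : chainV C w i k (p + q) = Lam • p + Mu • q := by
      have h1 : p + q = (1 : ℝ) • p + (1 : ℝ) • q := by simp
      rw [h1, chain_lin, hcp, hcq]
      simp
    rw [hchain, hlin] at hMTX
    have hmem : Lam • p + Mu • q ∈ Submodule.span ℝ ({p + q} : Set V3) := by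
      rw [← hMTX]
      exact Submodule.mem_span_singleton_self _
    obtain ⟨t, ht⟩ := Submodule.mem_span_singleton.1 hmem
    have htL : t = Lam := by
      have := congrArg (fun z => w ⬝ᵥ z) ht
      simp only [dotProduct_smul, dotProduct_add, hwq, smul_eq_mul, mul_add, add_zero, mul_zero] at this
      exact mul_right_cancel₀ hwp this
    rw [htL, smul_add] at ht
    have hcancel : Lam • q = Mu • q := add_left_cancel ht
    have hsub : (Lam - Mu) • q = 0 := by rw [sub_smul, hcancel, sub_self]
    rcases smul_eq_zero.1 hsub with h | h
    · linarith [sub_eq_zero.1 (by linarith : Lam - Mu = 0)]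
    · exact absurd h hq0
  · -- Lam = Mu implies monodromy trivial
    intro hLM
    intro X hXle hX1
    have hXbot : X ≠ ⊥ := by
      intro h0
      rw [h0] at hX1
      simp at hX1
    obtain ⟨x, hxX, hx0⟩ := Submodule.exists_mem_ne_zero_of_ne_bot hXbot
    have hXx : Submodule.span ℝ {x} = X := by
      apply Submodule.eq_of_le_of_finrank_le ((Submodule.span_singleton_le_iff_mem x X).2 hxX)
      rw [hX1, finrank_span_singleton hx0]
    have hmx : m ⬝ᵥ x = 0 := by
      have : x ∈ kerD m := by
        rw [hmdef, ← L_eq_kerD C i]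
        exact hXle hxX
      exact mem_kerD.1 this
    obtain ⟨c, d, hcd⟩ := Submodule.mem_span_pair.1 (by rw [← hker]; exact mem_kerD.2 hmx)
    have hchain := (chain_span C hGP hℓ hint i k x hx0 hmx).1
    have hlin : chainV C w i k x = Lam • x := by
      rw [← hcd, chain_lin, hcp, hcq, ← hLM, smul_comm c Lam p, smul_comm d Lam q, smul_add]
    rw [← hXx, hchain, hlin, span_singleton_smul hLam0]

end Cycle

/-- Triviality of the monodromy of a framed cycle in general position does not depend on the
choice of the auxiliary line: if neither `ℓ'` nor `ℓ''` contains an intersection point of a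
pair of distinct edge lines, then the monodromy with respect to `ℓ'` is trivial iff the one
with respect to `ℓ''` is. -/
theorem stmt13 (k : ℕ) [NeZero k] (C : FramedCycle k) (hGP : GenPos C)
    (ℓ' ℓ'' : Submodule ℝ V3)
    (hℓ' : Module.finrank ℝ ℓ' = 2) (hℓ'' : Module.finrank ℝ ℓ'' = 2)
    (hℓ'int : ∀ i j : Fin k, i ≠ j → ¬(edgeLn C i ⊓ edgeLn C j ≤ ℓ'))
    (hℓ''int : ∀ i j : Fin k, i ≠ j → ¬(edgeLn C i ⊓ edgeLn C j ≤ ℓ''))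
    (i : Fin k) :
    MonoTrivial C ℓ' i ↔ MonoTrivial C ℓ'' i := by
  rw [mono_iff C hGP hℓ' hℓ'int i, mono_iff C hGP hℓ'' hℓ''int i]
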